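/- arXiv:1507.08089 — 2 statements merged into one kernel-verified Lean document; each statement's English description precedes it below -/
import Mathlib

section
/- Let p : ℝ^n → ℝ be locally log-Hölder continuous with constant c_log(p), and suppose p ≥ p^- > 0. For any cube Q with |Q| < 1, any y₀ ∈ Q, and any h ∈ ℝ^n, setting N as the telescoping number (N = ⌊|h|/|Q|⌋ + 1 if |h| > |Q|, else N = 1), one has (1/|Q|)^{(p(y₀) − p(y₀+h))/p^-} ≤ c · exp(N c_log(p)/p^-), where c > 0 is independent of y₀, h, N and |Q|. -/
private lemma aux_log_ineq (t u : ℝ) (ht : 0 < t) (hu : 1 ≤ u) :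
    Real.log t ≤ u * Real.log (Real.exp 1 + t / u) := by
  have hu0 : (0:ℝ) < u := lt_of_lt_of_le one_pos hu
  have htu : 0 ≤ t / u := div_nonneg ht.le hu0.le
  have he : (0:ℝ) < Real.exp 1 := Real.exp_pos 1
  have hL1 : (1:ℝ) ≤ Real.log (Real.exp 1 + t / u) := by
    calc (1:ℝ) = Real.log (Real.exp 1) := (Real.log_exp 1).symm
    _ ≤ Real.log (Real.exp 1 + t / u) :=
        Real.log_le_log he (le_add_of_nonneg_right htu)
  have h1 : Real.log t ≤ Real.log (Real.exp 1 + t) :=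
    Real.log_le_log ht (by linarith)
  have h2 : Real.log (Real.exp 1 + t) ≤ Real.log (u * (Real.exp 1 + t / u)) := by
    apply Real.log_le_log (by linarith)
    have : u * (Real.exp 1 + t / u) = Real.exp 1 * u + t := by
      field_simp
    rw [this]
    nlinarith
  have h3 : Real.log (u * (Real.exp 1 + t / u)) =
      Real.log u + Real.log (Real.exp 1 + t / u) := by
    rw [Real.log_mul (ne_of_gt hu0) (by positivity)]
  have h4 : Real.log u ≤ u - 1 := by
    have := Real.log_le_sub_one_of_pos hu0
    linarith
  nlinarith [mul_le_mul_of_nonneg_left hL1 (by linarith : (0:ℝ) ≤ u - 1)]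

/-- If `p` is locally log-Hölder continuous with constant `cLog` and `p ≥ pm > 0`, then for any
cube of measure `vQ < 1`, any `y₀`, `h` and the telescoping number `N`, one has
`(1/vQ)^{(p(y₀) - p(y₀+h))/pm} ≤ c exp(N cLog / pm)` with `c` independent of `y₀, h, N, vQ`. -/
theorem rpow_diff_le_exp_telescoping (n : ℕ) (cLog : ℝ) (hc : 0 < cLog)
    (p : EuclideanSpace ℝ (Fin n) → ℝ)
    (hlog : ∀ x y, |p x - p y| ≤ cLog / Real.log (Real.exp 1 + 1 / ‖x - y‖))
    (pm : ℝ) (hpm : 0 < pm) (hple : ∀ x, pm ≤ p x) :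
    ∃ c > 0, ∀ (vQ : ℝ), 0 < vQ → vQ < 1 →
      ∀ (y₀ h : EuclideanSpace ℝ (Fin n)) (N : ℕ),
        N = (if vQ < ‖h‖ then ⌊‖h‖ / vQ⌋₊ + 1 else 1) →
        (1 / vQ) ^ ((p y₀ - p (y₀ + h)) / pm) ≤ c * Real.exp (N * cLog / pm) := by
  refine ⟨1, one_pos, fun vQ hvQ hvQ1 y₀ h N hN => ?_⟩
  have hQpos : (0:ℝ) < 1 / vQ := by positivity
  have hlogQ : 0 < Real.log (1 / vQ) :=
    Real.log_pos ((one_lt_div hvQ).mpr hvQ1)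
  have hN1 : (1:ℝ) ≤ (N:ℝ) := by
    rw [hN]; split
    · exact_mod_cast Nat.succ_le_succ (Nat.zero_le _)
    · norm_num
  -- main key inequality
  have key : Real.log (1 / vQ) * (p y₀ - p (y₀ + h)) ≤ (N:ℝ) * cLog := by
    rcases eq_or_ne h 0 with rfl | hh0
    · simp only [add_zero, sub_self, mul_zero]
      positivity
    · have hh : 0 < ‖h‖ := norm_pos_iff.mpr hh0
      set L := Real.log (Real.exp 1 + 1 / ‖h‖) with hLdef
      have hL1 : (1:ℝ) ≤ L := by
        calc (1:ℝ) = Real.log (Real.exp 1) := (Real.log_exp 1).symm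
        _ ≤ L := Real.log_le_log (Real.exp_pos 1)
            (le_add_of_nonneg_right (by positivity))
      have habs : |p y₀ - p (y₀ + h)| ≤ cLog / L := by
        have := hlog y₀ (y₀ + h)
        have hnorm : ‖y₀ - (y₀ + h)‖ = ‖h‖ := by
          rw [show y₀ - (y₀ + h) = -h by abel, norm_neg]
        rwa [hnorm] at this
      have hQN : Real.log (1 / vQ) ≤ (N:ℝ) * L := by
        rw [hN]
        split
        · rename_i hlt
          have hu1 : (1:ℝ) ≤ ‖h‖ / vQ := by
            rw [le_div_iff₀ hvQ]; linarith
          have := aux_log_ineq (1 / vQ) (‖h‖ / vQ) hQpos hu1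
          have heq : (1 / vQ) / (‖h‖ / vQ) = 1 / ‖h‖ := by
            field_simp
          rw [heq] at this
          refine this.trans ?_
          have hNu : ‖h‖ / vQ ≤ ((⌊‖h‖ / vQ⌋₊ + 1 : ℕ) : ℝ) := by
            push_cast
            exact (Nat.lt_floor_add_one _).le
          exact mul_le_mul_of_nonneg_right hNu (by linarith)
        · rename_i hnlt
          push_neg at hnlt
          have : Real.log (1 / vQ) ≤ Real.log (Real.exp 1 + 1 / ‖h‖) := by
            apply Real.log_le_log hQpos
            have h1 : 1 / vQ ≤ 1 / ‖h‖ := one_div_le_one_div_of_le hh hnlt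
            linarith [Real.exp_pos 1]
          rw [Nat.cast_one, one_mul]; exact this
      have hLpos : (0:ℝ) < L := lt_of_lt_of_le one_pos hL1
      calc Real.log (1 / vQ) * (p y₀ - p (y₀ + h))
          ≤ Real.log (1 / vQ) * (cLog / L) := by
            apply mul_le_mul_of_nonneg_left _ hlogQ.le
            exact (le_abs_self _).trans habs
        _ ≤ ((N:ℝ) * L) * (cLog / L) := by
            apply mul_le_mul_of_nonneg_right hQN (by positivity)
        _ = (N:ℝ) * cLog := by field_simp
  rw [Real.rpow_def_of_pos hQpos, one_mul, Real.exp_le_exp, div_eq_mul_inv ((N:ℝ) * cLog),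
    show (p y₀ - p (y₀ + h)) / pm = (p y₀ - p (y₀ + h)) * pm⁻¹ by ring, ← mul_assoc]
  exact mul_le_mul_of_nonneg_right key (by positivity)
end

section
/- Let p : ℝ^n → [1, ∞) be measurable, Q a cube, h, x as above, and 0 < γ ≤ 1. Define f₃(y+h) := f(y+h)·1_{{|f(y+h)| ≤ 1, p(y+h) > p(x)}}(y) and 1/q(x,y,h) := max(1/p(x) − 1/p(y+h), 0). Then ( (γ/|Q|) ∫_Q |f₃(y+h)| dy )^{p(x)} ≤ (1/|Q|) ∫_Q ( |f(y+h)|^{p(y+h)} + γ^{q(x,y,h)} ) dy. -/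
/-!
Both sides are averages over `Q`. Jensen's inequality for the convex map `t ↦ t ^ p(x)` moves
the power inside the average; measurability is not needed for this, since a lower Lebesgue
integral is attained by a measurable minorant. Pointwise, where `f₃(y + h) ≠ 0` we have
`p(y + h) > p(x)`, and Young's inequality with exponents `p(y + h) / p(x)` and its conjugate gives
`(γ |f(y + h)|) ^ p(x) ≤ |f(y + h)| ^ p(y + h) + γ ^ q(x, y, h)`.
-/

open MeasureTheory ENNReal

/-- `Q ⊆ ℝⁿ` is an (axis-parallel, closed) cube. -/
def IsCube {n : ℕ} (Q : Set (EuclideanSpace ℝ (Fin n))) : Prop :=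
  ∃ (a : EuclideanSpace ℝ (Fin n)) (ℓ : ℝ), 0 < ℓ ∧
    Q = {x | ∀ i, a i ≤ x i ∧ x i ≤ a i + ℓ}

/-- `γ^e` for a real `γ > 0` and an extended-real exponent `e`, with the convention
`γ^∞ = 0`. -/
noncomputable def gammaPow (γ : ℝ) (e : ℝ≥0∞) : ℝ≥0∞ :=
  if e = ⊤ then 0 else ENNReal.ofReal (γ ^ e.toReal)

namespace MeasureTheory

variable {α : Type*} [MeasurableSpace α] {μ : Measure α} {c : ℝ}

theorem rpow_lintegral_le_lintegral_rpow [IsProbabilityMeasure μ] (hc : 1 ≤ c)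
    (f : α → ℝ≥0∞) : (∫⁻ x, f x ∂μ) ^ c ≤ ∫⁻ x, f x ^ c ∂μ := by
  have hc0 : 0 < c := zero_lt_one.trans_le hc
  obtain ⟨g, hg, hgf, hfg⟩ := exists_measurable_le_lintegral_eq μ f
  have jensen : ∫⁻ x, g x ∂μ ≤ (∫⁻ x, g x ^ c ∂μ) ^ c⁻¹ := by
    simpa [eLpNorm'_eq_lintegral_enorm] using
      eLpNorm'_le_eLpNorm'_of_exponent_le one_pos hc μ hg.aestronglyMeasurable
  calc (∫⁻ x, f x ∂μ) ^ c = (∫⁻ x, g x ∂μ) ^ c := by rw [hfg]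
    _ ≤ ∫⁻ x, g x ^ c ∂μ := by
      simpa [← rpow_mul, hc0.ne'] using rpow_le_rpow jensen hc0.le
    _ ≤ ∫⁻ x, f x ^ c ∂μ := lintegral_mono fun x => rpow_le_rpow (hgf x) hc0.le

theorem rpow_laverage_le_laverage_rpow (hc : 1 ≤ c) (f : α → ℝ≥0∞) :
    (⨍⁻ x, f x ∂μ) ^ c ≤ ⨍⁻ x, f x ^ c ∂μ := by
  rcases eq_zero_or_neZero μ with rfl | _
  · simp [zero_rpow_of_pos (zero_lt_one.trans_le hc)]
  by_cases hμ : μ Set.univ = ∞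
  -- then the normalised measure `(μ univ)⁻¹ • μ` is zero
  · simp [laverage_eq', hμ, zero_rpow_of_pos (zero_lt_one.trans_le hc)]
  have : IsFiniteMeasure μ := ⟨lt_top_iff_ne_top.2 hμ⟩
  exact rpow_lintegral_le_lintegral_rpow hc f

end MeasureTheory

theorem Real.mul_rpow_le_rpow_add_rpow {c P t γ : ℝ} (hc : 0 < c) (hcP : c < P) (ht : 0 ≤ t)
    (hγ : 0 ≤ γ) : (γ * t) ^ c ≤ t ^ P + γ ^ (1 / c - 1 / P)⁻¹ := by
  have hP : P ≠ 0 := (hc.trans hcP).ne'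
  have hPc : P - c ≠ 0 := (sub_pos.2 hcP).ne'
  have hconj : (P / c).HolderConjugate (P / (P - c)) := by
    rw [Real.holderConjugate_iff]
    refine ⟨(one_lt_div hc).2 hcP, ?_⟩
    field_simp
    ring
  have hq : (1 / c - 1 / P)⁻¹ = c * (P / (P - c)) := by
    field_simp
  have young := Real.young_inequality_of_nonneg (Real.rpow_nonneg ht c) (Real.rpow_nonneg hγ c)
    hconj
  rw [← Real.rpow_mul ht, ← Real.rpow_mul hγ, mul_div_cancel₀ _ hc.ne'] at young
  rw [Real.mul_rpow hγ ht, mul_comm, hq]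
  refine young.trans (add_le_add ?_ ?_)
  · exact div_le_self (Real.rpow_nonneg ht P) hconj.lt.le
  · exact div_le_self (Real.rpow_nonneg hγ _) hconj.symm.lt.le

theorem gammaPow_inv_ofReal {e : ℝ} (γ : ℝ) (he : 0 < e) :
    gammaPow γ (ENNReal.ofReal e)⁻¹ = ENNReal.ofReal (γ ^ e⁻¹) := by
  rw [gammaPow, if_neg (inv_ne_top.2 (ofReal_pos.2 he).ne'), toReal_inv, toReal_ofReal he.le]

theorem rpow_ofReal_mul_le_add_gammaPow {c P t γ : ℝ} (hc : 0 < c) (hcP : c < P) (ht : 0 ≤ t)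
    (hγ : 0 ≤ γ) :
    (ENNReal.ofReal γ * ENNReal.ofReal t) ^ c ≤
      ENNReal.ofReal (t ^ P) + gammaPow γ (ENNReal.ofReal (max (1 / c - 1 / P) 0))⁻¹ := by
  have he : 0 < 1 / c - 1 / P := sub_pos.2 (one_div_lt_one_div_of_lt hc hcP)
  rw [max_eq_left he.le, gammaPow_inv_ofReal γ he, ← ofReal_mul hγ,
    ofReal_rpow_of_nonneg (mul_nonneg hγ ht) hc.le,
    ← ofReal_add (Real.rpow_nonneg ht P) (Real.rpow_nonneg hγ _)]
  exact ofReal_le_ofReal (Real.mul_rpow_le_rpow_add_rpow hc hcP ht hγ)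

theorem average_f3_rpow_le_general (n : ℕ) (p : EuclideanSpace ℝ (Fin n) → ℝ)
    (hp : ∀ x, 1 ≤ p x)
    (Q : Set (EuclideanSpace ℝ (Fin n)))
    (h x : EuclideanSpace ℝ (Fin n))
    (γ : ℝ) (hγ0 : 0 < γ)
    (f : EuclideanSpace ℝ (Fin n) → ℝ) :
    (ENNReal.ofReal γ * (volume Q)⁻¹ * ∫⁻ y in Q, ENNReal.ofReal
        (|({y | |f (y + h)| ≤ 1 ∧ p x < p (y + h)}.indicator (fun y => f (y + h))) y|))
      ^ p x
      ≤ (volume Q)⁻¹ * ∫⁻ y in Q,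
          (ENNReal.ofReal (|f (y + h)| ^ p (y + h)) +
            gammaPow γ (ENNReal.ofReal (max (1 / p x - 1 / p (y + h)) 0))⁻¹) := by
  set S := {y | |f (y + h)| ≤ 1 ∧ p x < p (y + h)}
  set f₃ := S.indicator fun y => f (y + h)
  have hc : 0 < p x := zero_lt_one.trans_le (hp x)
  have pointwise (y) : (ENNReal.ofReal γ * ENNReal.ofReal |f₃ y|) ^ p x ≤
      ENNReal.ofReal (|f (y + h)| ^ p (y + h)) +
        gammaPow γ (ENNReal.ofReal (max (1 / p x - 1 / p (y + h)) 0))⁻¹ := by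
    by_cases hy : y ∈ S
    · rw [show f₃ y = f (y + h) from Set.indicator_of_mem hy _]
      exact rpow_ofReal_mul_le_add_gammaPow hc hy.2 (abs_nonneg _) hγ0.le
    · simp [f₃, Set.indicator_of_notMem hy, zero_rpow_of_pos hc]
  calc _ = (⨍⁻ y in Q, ENNReal.ofReal γ * ENNReal.ofReal |f₃ y| ∂volume) ^ p x := by
        rw [setLAverage_eq, lintegral_const_mul' _ _ ofReal_ne_top, ENNReal.div_eq_inv_mul,
          mul_left_comm, mul_assoc]
    _ ≤ ⨍⁻ y in Q, (ENNReal.ofReal γ * ENNReal.ofReal |f₃ y|) ^ p x ∂volume :=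
        rpow_laverage_le_laverage_rpow (hp x) _
    _ ≤ _ := laverage_mono_ae (.of_forall pointwise)
    _ = _ := by rw [setLAverage_eq, ENNReal.div_eq_inv_mul]

/-- Estimate for the part `f₃` of `f` where `|f(y+h)| ≤ 1` and `p(y+h) > p(x)`:
`((γ/|Q|) ∫_Q |f₃(y+h)| dy)^{p(x)} ≤ (1/|Q|) ∫_Q (|f(y+h)|^{p(y+h)} + γ^{q(x,y,h)}) dy`,
where `1/q(x,y,h) = max(1/p(x) - 1/p(y+h), 0)`. -/
theorem average_f3_rpow_le (n : ℕ) (p : EuclideanSpace ℝ (Fin n) → ℝ)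
    (hp : ∀ x, 1 ≤ p x) (hpm : Measurable p)
    (Q : Set (EuclideanSpace ℝ (Fin n))) (hQ : IsCube Q)
    (h x : EuclideanSpace ℝ (Fin n)) (hx : x ∈ Q)
    (γ : ℝ) (hγ0 : 0 < γ) (hγ1 : γ ≤ 1)
    (f : EuclideanSpace ℝ (Fin n) → ℝ) (hf : Measurable f) :
    (ENNReal.ofReal γ * (volume Q)⁻¹ * ∫⁻ y in Q, ENNReal.ofReal
        (|({y | |f (y + h)| ≤ 1 ∧ p x < p (y + h)}.indicator (fun y => f (y + h))) y|))
      ^ p x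
      ≤ (volume Q)⁻¹ * ∫⁻ y in Q,
          (ENNReal.ofReal (|f (y + h)| ^ p (y + h)) +
            gammaPow γ (ENNReal.ofReal (max (1 / p x - 1 / p (y + h)) 0))⁻¹) :=
  average_f3_rpow_le_general n p hp Q h x γ hγ0 f
end
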